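/- Let w₀, w₁, w₂, d be positive integers, let Q(X) = (1+dX)·(1+w₀X)⁻¹ ∈ ℚ[[X]], let γ₁, γ₂, γ₃ ∈ ℚ be the coefficients of X, X², X³ in Q, set S₀ = d/w₀, S₁ = S₀γ₁, S₂ = S₀γ₁², S₀₁ = S₀γ₂, and let D(X) = γ₁X + (γ₁² + γ₂ − ½γ₁S₁)X² + (1/6)(γ₁³ + 11γ₁γ₂ + 6γ₃ − 2γ₁S₀₁ − 5γ₁²S₁ − 4γ₂S₁ + γ₁S₁² + 2γ₁S₂)X³. Then −1 + (1/(w₀w₁w₂))·(coefficient of X³ in (1+w₀X)(1+w₁X)(1+w₂X)·D(X)) = ((d−2w₀)/(6w₀³w₁w₂))·( d⁴ − 4d³w₀ + d²w₀(8w₀ − 3(w₁+w₂)) + 2dw₀²(3(w₁+w₂) − 4w₀) + 3w₀²(w₀² − w₀(w₁+w₂) + 2w₁w₂) ). -/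

import Mathlib

/-!
Since `Q = 1 + (d - w₀) X / (1 + w₀ X)`, its coefficients are `γₖ = (d - w₀)(-w₀)^(k-1)`.
The coefficient of `X³` in `(1 + w₀X)(1 + w₁X)(1 + w₂X)·D` only involves the elementary
symmetric functions of the weights and `γ₁, γ₂, γ₃`, so after substitution the claim is an
identity of rational functions in `d, w₀, w₁, w₂`.
-/

open PowerSeries

/-- The linear power series `1 + r·X` over `ℚ`. -/
noncomputable def lin (r : ℚ) : ℚ⟦X⟧ := 1 + C r * X

lemma constantCoeff_lin (r : ℚ) : constantCoeff (lin r) = 1 := by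
  simp [lin]

lemma coeff_succ_lin (r : ℚ) (n : ℕ) : coeff (n + 1) (lin r) = if n = 0 then r else 0 := by
  rcases n with _ | n <;> simp [lin]

lemma coeff_lin_mul (r : ℚ) (φ : ℚ⟦X⟧) (n : ℕ) :
    coeff (n + 1) (lin r * φ) = coeff (n + 1) φ + r * coeff n φ := by
  have : lin r * φ = φ + C r * (X * φ) := by rw [lin]; ring
  simp [this, coeff_succ_X_mul]

lemma coeff_succ_lin_mul_inv_lin (a b : ℚ) (n : ℕ) :
    coeff (n + 1) (lin a * (lin b)⁻¹) = (a - b) * (-b) ^ n := by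
  set Q := lin a * (lin b)⁻¹
  have hQ : lin b * Q = lin a := by
    rw [mul_comm, ← eq_mul_inv_iff_mul_eq (by simp [constantCoeff_lin])]
  have h0 : coeff 0 Q = 1 := by
    simpa [coeff_zero_eq_constantCoeff, constantCoeff_lin] using
      congrArg constantCoeff hQ
  have hrec (m : ℕ) : coeff (m + 1) Q + b * coeff m Q = if m = 0 then a else 0 := by
    rw [← coeff_lin_mul, hQ, coeff_succ_lin]
  induction n with
  | zero => simpa [h0, eq_sub_iff_add_eq] using hrec 0
  | succ n ih =>
    have := hrec (n + 1)
    simp only [ih, Nat.add_one_ne_zero, if_false] at this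
    linear_combination this

lemma coeff_three_lin_mul_lin_mul_lin_mul (a b c p q r : ℚ) :
    coeff 3 (lin a * lin b * lin c * (C p * X + C q * X ^ 2 + C r * X ^ 3)) =
      r + q * (a + b + c) + p * (a * b + a * c + b * c) := by
  have h : lin a * lin b * lin c * (C p * X + C q * X ^ 2 + C r * X ^ 3) =
      C p * X + C (q + p * (a + b + c)) * X ^ 2
        + C (r + q * (a + b + c) + p * (a * b + a * c + b * c)) * X ^ 3
        + C (r * (a + b + c) + q * (a * b + a * c + b * c) + p * (a * b * c)) * X ^ 4
        + C (r * (a * b + a * c + b * c) + q * (a * b * c)) * X ^ 5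
        + C (r * (a * b * c)) * X ^ 6 := by
    simp only [lin, map_add, map_mul]; ring
  rw [h]
  simp only [map_add (coeff 3), coeff_C_mul, coeff_X, coeff_X_pow]
  norm_num

theorem stmt_10_general (w₀ w₁ w₂ d : ℕ) (hw₀ : 0 < w₀) (hw₁ : 0 < w₁) (hw₂ : 0 < w₂)
    (Q : ℚ⟦X⟧) (hQ : Q = lin (d : ℚ) * (lin (w₀ : ℚ))⁻¹)
    (γ₁ γ₂ γ₃ : ℚ) (hγ₁ : γ₁ = coeff 1 Q) (hγ₂ : γ₂ = coeff 2 Q)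
    (hγ₃ : γ₃ = coeff 3 Q)
    (S₀ S₁ S₂ S₀₁ : ℚ) (hS₀ : S₀ = (d : ℚ) / (w₀ : ℚ)) (hS₁ : S₁ = S₀ * γ₁)
    (hS₂ : S₂ = S₀ * γ₁ ^ 2) (hS₀₁ : S₀₁ = S₀ * γ₂)
    (D : ℚ⟦X⟧)
    (hD : D = C γ₁ * X + C (γ₁ ^ 2 + γ₂ - (1 / 2) * γ₁ * S₁) * X ^ 2
        + C ((1 / 6) * (γ₁ ^ 3 + 11 * γ₁ * γ₂ + 6 * γ₃ - 2 * γ₁ * S₀₁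
            - 5 * γ₁ ^ 2 * S₁ - 4 * γ₂ * S₁ + γ₁ * S₁ ^ 2 + 2 * γ₁ * S₂)) * X ^ 3) :
    -1 + (1 / ((w₀ : ℚ) * (w₁ : ℚ) * (w₂ : ℚ))) *
        coeff 3 (lin (w₀ : ℚ) * lin (w₁ : ℚ) * lin (w₂ : ℚ) * D) =
      (((d : ℚ) - 2 * (w₀ : ℚ)) / (6 * (w₀ : ℚ) ^ 3 * (w₁ : ℚ) * (w₂ : ℚ))) *
        ((d : ℚ) ^ 4 - 4 * (d : ℚ) ^ 3 * (w₀ : ℚ)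
          + (d : ℚ) ^ 2 * (w₀ : ℚ) * (8 * (w₀ : ℚ) - 3 * ((w₁ : ℚ) + (w₂ : ℚ)))
          + 2 * (d : ℚ) * (w₀ : ℚ) ^ 2 * (3 * ((w₁ : ℚ) + (w₂ : ℚ)) - 4 * (w₀ : ℚ))
          + 3 * (w₀ : ℚ) ^ 2 * ((w₀ : ℚ) ^ 2 - (w₀ : ℚ) * ((w₁ : ℚ) + (w₂ : ℚ))
              + 2 * (w₁ : ℚ) * (w₂ : ℚ))) := by
  have hγ (n : ℕ) : coeff (n + 1) Q = ((d : ℚ) - w₀) * (-(w₀ : ℚ)) ^ n := by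
    rw [hQ, coeff_succ_lin_mul_inv_lin]
  rw [hD, coeff_three_lin_mul_lin_mul_lin_mul, hS₁, hS₂, hS₀₁, hS₀, hγ₁, hγ₂, hγ₃,
    hγ 0, hγ 1, hγ 2]
  field_simp
  ring

theorem stmt_10 (w₀ w₁ w₂ d : ℕ) (hw₀ : 0 < w₀) (hw₁ : 0 < w₁) (hw₂ : 0 < w₂)
    (hd : 0 < d)
    (Q : ℚ⟦X⟧) (hQ : Q = lin (d : ℚ) * (lin (w₀ : ℚ))⁻¹)
    (γ₁ γ₂ γ₃ : ℚ) (hγ₁ : γ₁ = coeff 1 Q) (hγ₂ : γ₂ = coeff 2 Q)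
    (hγ₃ : γ₃ = coeff 3 Q)
    (S₀ S₁ S₂ S₀₁ : ℚ) (hS₀ : S₀ = (d : ℚ) / (w₀ : ℚ)) (hS₁ : S₁ = S₀ * γ₁)
    (hS₂ : S₂ = S₀ * γ₁ ^ 2) (hS₀₁ : S₀₁ = S₀ * γ₂)
    (D : ℚ⟦X⟧)
    (hD : D = C γ₁ * X + C (γ₁ ^ 2 + γ₂ - (1 / 2) * γ₁ * S₁) * X ^ 2
        + C ((1 / 6) * (γ₁ ^ 3 + 11 * γ₁ * γ₂ + 6 * γ₃ - 2 * γ₁ * S₀₁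
            - 5 * γ₁ ^ 2 * S₁ - 4 * γ₂ * S₁ + γ₁ * S₁ ^ 2 + 2 * γ₁ * S₂)) * X ^ 3) :
    -1 + (1 / ((w₀ : ℚ) * (w₁ : ℚ) * (w₂ : ℚ))) *
        coeff 3 (lin (w₀ : ℚ) * lin (w₁ : ℚ) * lin (w₂ : ℚ) * D) =
      (((d : ℚ) - 2 * (w₀ : ℚ)) / (6 * (w₀ : ℚ) ^ 3 * (w₁ : ℚ) * (w₂ : ℚ))) *
        ((d : ℚ) ^ 4 - 4 * (d : ℚ) ^ 3 * (w₀ : ℚ)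
          + (d : ℚ) ^ 2 * (w₀ : ℚ) * (8 * (w₀ : ℚ) - 3 * ((w₁ : ℚ) + (w₂ : ℚ)))
          + 2 * (d : ℚ) * (w₀ : ℚ) ^ 2 * (3 * ((w₁ : ℚ) + (w₂ : ℚ)) - 4 * (w₀ : ℚ))
          + 3 * (w₀ : ℚ) ^ 2 * ((w₀ : ℚ) ^ 2 - (w₀ : ℚ) * ((w₁ : ℚ) + (w₂ : ℚ))
              + 2 * (w₁ : ℚ) * (w₂ : ℚ))) :=
  stmt_10_general w₀ w₁ w₂ d hw₀ hw₁ hw₂ Q hQ γ₁ γ₂ γ₃ hγ₁ hγ₂ hγ₃ S₀ S₁ S₂ S₀₁ hS₀ hS₁ hS₂ hS₀₁ D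
    hD
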